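/- arXiv:1311.0117 — 3 statements merged into one kernel-verified Lean document; each statement's English description precedes it below -/
import Mathlib

section
/- Let σ = [p₀, …, p_k] be a non-degenerate k-simplex in ℝ^m with k > 0, and let P be the m × k matrix whose i-th column is p_i − p₀. Then the i-th row of the pseudo-inverse P⁺ = (PᵀP)⁻¹Pᵀ is wᵢᵀ, where wᵢ is orthogonal to the affine hull of the facet of σ opposite pᵢ and ‖wᵢ‖ = 1/D(pᵢ,σ), where D(pᵢ,σ) is the altitude of pᵢ in σ. Consequently the smallest singular value satisfies s_k(P) ≥ √k · t(σ) · L(σ). -/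
open Matrix Metric
open scoped Classical BigOperators

noncomputable section

/-- Euclidean space ℝ^m. -/
abbrev E (m : ℕ) := EuclideanSpace ℝ (Fin m)

/-- Euclidean norm of a plain vector. -/
noncomputable def euclNorm {n : ℕ} (v : Fin n → ℝ) : ℝ := Real.sqrt (∑ i, v i ^ 2)

/-- Largest singular value (operator norm) of a matrix. -/
noncomputable def largeSV {m k : ℕ} (P : Matrix (Fin m) (Fin k) ℝ) : ℝ :=
  ⨆ x : {x : Fin k → ℝ // euclNorm x = 1}, euclNorm (P.mulVec x)

/-- Smallest singular value of a matrix. -/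
noncomputable def smallSV {m k : ℕ} (P : Matrix (Fin m) (Fin k) ℝ) : ℝ :=
  ⨅ x : {x : Fin k → ℝ // euclNorm x = 1}, euclNorm (P.mulVec x)

/-- Matrix of edge vectors pᵢ − p₀ of a k-simplex. -/
noncomputable def vertMatrix {m k : ℕ} (p : Fin (k+1) → E m) : Matrix (Fin m) (Fin k) ℝ :=
  fun a j => p j.succ a - p 0 a

/-- Pseudo-inverse (PᵀP)⁻¹Pᵀ of a matrix of full column rank. -/
noncomputable def pseudoInv {m k : ℕ} (P : Matrix (Fin m) (Fin k) ℝ) :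
    Matrix (Fin k) (Fin m) ℝ := (Pᵀ * P)⁻¹ * Pᵀ

/-- Longest edge length of a simplex given by its vertices. -/
noncomputable def longEdge {m k : ℕ} (p : Fin (k+1) → E m) : ℝ :=
  ⨆ i, ⨆ j, dist (p i) (p j)

/-- Altitude of vertex i: distance to affine hull of the opposite facet. -/
noncomputable def altitude {m k : ℕ} (p : Fin (k+1) → E m) (i : Fin (k+1)) : ℝ :=
  Metric.infDist (p i) (↑(affineSpan ℝ (p '' {j | j ≠ i})) : Set (E m))

/-- Thickness of a k-simplex: 1 if k = 0, else min altitude / (k · longest edge). -/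
noncomputable def thickness {m k : ℕ} (p : Fin (k+1) → E m) : ℝ :=
  if k = 0 then 1 else (⨅ i, altitude p i) / (k * longEdge p)

/-- Longest edge of a finite vertex set. -/
noncomputable def fLongEdge {m : ℕ} (s : Finset (E m)) : ℝ := Metric.diam (s : Set (E m))

/-- Minimal altitude of a finite vertex set. -/
noncomputable def fMinAlt {m : ℕ} (s : Finset (E m)) : ℝ :=
  ⨅ p : {p // p ∈ s},
    Metric.infDist (p : E m) (↑(affineSpan ℝ ((s.erase (p : E m)) : Set (E m))) : Set (E m))

/-- Thickness of a simplex given as a finite vertex set. -/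
noncomputable def fThickness {m : ℕ} (s : Finset (E m)) : ℝ :=
  if s.card ≤ 1 then 1 else fMinAlt s / ((s.card - 1 : ℕ) * fLongEdge s)

/-- A simplex (finite vertex set) is Γ₀-good if every j-face has thickness ≥ Γ₀^j. -/
def isGood {m : ℕ} (Γ₀ : ℝ) (s : Finset (E m)) : Prop :=
  ∀ t ⊆ s, t.Nonempty → fThickness t ≥ Γ₀ ^ (t.card - 1)

/-- A Γ₀-flake: not Γ₀-good, but every facet is Γ₀-good. -/
def isFlake {m : ℕ} (Γ₀ : ℝ) (s : Finset (E m)) : Prop :=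
  ¬ isGood Γ₀ s ∧ ∀ p ∈ s, isGood Γ₀ (s.erase p)

/-!
Non-degeneracy puts no vertex on the affine hull of its opposite facet, so the edge vectors
pⱼ₊₁ - p₀ are linearly independent and PᵀP is invertible; then P⁺P = 1 says that the rows wᵢ of
P⁺ are dual to the edge vectors. Hence wᵢ annihilates the direction of the facet opposite pᵢ₊₁
and ⟪wᵢ, pᵢ₊₁ - p₀⟫ = 1, so by Cauchy–Schwarz every point of that facet is at distance at least
1/‖wᵢ‖ from pᵢ₊₁; as wᵢ lies in the column space of P, the point pᵢ₊₁ - wᵢ/‖wᵢ‖² lies on the facet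
and the bound is attained. For a unit vector x, writing x = P⁺(Px) bounds each |xᵢ| by
‖Px‖/D(pᵢ₊₁), and summing squares over the k coordinates gives ‖Px‖ ≥ min D/√k = √k·t·L.
-/

open scoped RealInnerProductSpace

section DualVector

variable {F : Type*} [NormedAddCommGroup F] [InnerProductSpace ℝ F]

theorem sub_inv_norm_sq_smul_mem {V : Submodule ℝ F} {v w : F} (hwV : w ∈ Vᗮ)
    (hwv : ⟪w, v⟫ = 1) (hw : w ∈ V ⊔ ℝ ∙ v) : v - (‖w‖ ^ 2)⁻¹ • w ∈ V := by
  obtain ⟨u, hu, z, hz, rfl⟩ := Submodule.mem_sup.1 hw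
  obtain ⟨a, rfl⟩ := Submodule.mem_span_singleton.1 hz
  have ha : ‖u + a • v‖ ^ 2 = a := by
    rw [← real_inner_self_eq_norm_sq, inner_add_right,
      Submodule.inner_left_of_mem_orthogonal hu hwV, inner_smul_right, hwv, zero_add, mul_one]
  have ha0 : a ≠ 0 := by
    rintro rfl
    rw [sq_eq_zero_iff, norm_eq_zero] at ha
    rw [ha, inner_zero_left] at hwv
    exact zero_ne_one hwv
  rw [ha, smul_add, smul_smul, inv_mul_cancel₀ ha0, one_smul, sub_add_cancel_right]
  exact V.neg_mem (V.smul_mem _ hu)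

theorem infDist_eq_inv_norm_of_mem_orthogonal {H : AffineSubspace ℝ F} {q h₀ w : F} (h₀H : h₀ ∈ H)
    (hwH : w ∈ H.directionᗮ) (hwq : ⟪w, q - h₀⟫ = 1) (hw : w ∈ H.direction ⊔ ℝ ∙ (q - h₀)) :
    Metric.infDist q H = ‖w‖⁻¹ := by
  have hw0 : w ≠ 0 := by rintro rfl; simp at hwq
  refine le_antisymm ?_ ((Metric.le_infDist ⟨h₀, h₀H⟩).2 fun y hy => ?_)
  · have hfoot : q - (‖w‖ ^ 2)⁻¹ • w ∈ H := by
      have := AffineSubspace.vadd_mem_of_mem_direction (sub_inv_norm_sq_smul_mem hwH hwq hw) h₀H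
      rwa [vadd_eq_add, sub_right_comm, sub_add_cancel] at this
    calc Metric.infDist q H ≤ dist q (q - (‖w‖ ^ 2)⁻¹ • w) := Metric.infDist_le_dist_of_mem hfoot
      _ = ‖w‖⁻¹ := by
        rw [dist_eq_norm, sub_sub_cancel, norm_smul, norm_inv, norm_pow, norm_norm]
        field_simp
  · have hy1 : ⟪w, q - y⟫ = 1 := by
      rw [← sub_add_sub_cancel q h₀ y, inner_add_right, hwq, ← vsub_eq_sub h₀ y,
        Submodule.inner_left_of_mem_orthogonal (AffineSubspace.vsub_mem_direction h₀H hy) hwH,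
        add_zero]
    rw [inv_le_iff_one_le_mul₀' (norm_pos_iff.2 hw0), dist_eq_norm, ← hy1]
    exact real_inner_le_norm w (q - y)

end DualVector

section Matrix

theorem isUnit_det_transpose_mul_self {ι κ : Type*} [Fintype ι] [Fintype κ] [DecidableEq κ]
    {A : Matrix ι κ ℝ} (hA : Function.Injective A.mulVec) : IsUnit (Aᵀ * A).det := by
  have hpos := PosDef.conjTranspose_mul_self A hA
  rw [conjTranspose_eq_transpose_of_trivial] at hpos
  exact (isUnit_iff_isUnit_det _).1 hpos.isUnit

variable {m k : ℕ}

theorem pseudoInv_mul_self {A : Matrix (Fin m) (Fin k) ℝ} (hA : IsUnit (Aᵀ * A).det) :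
    pseudoInv A * A = 1 := by
  rw [pseudoInv, Matrix.mul_assoc, nonsing_inv_mul _ hA]

theorem euclNorm_eq_norm (v : Fin m → ℝ) : euclNorm v = ‖WithLp.toLp 2 v‖ := by
  simp [euclNorm, EuclideanSpace.norm_eq]

theorem euclNorm_nonneg (v : Fin m → ℝ) : 0 ≤ euclNorm v := Real.sqrt_nonneg _

theorem euclNorm_sq (v : Fin m → ℝ) : euclNorm v ^ 2 = ∑ i, v i ^ 2 :=
  Real.sq_sqrt (by positivity)

theorem inv_le_smallSV_of_mul_eq_one (hk : 0 < k) {P : Matrix (Fin m) (Fin k) ℝ}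
    {Q : Matrix (Fin k) (Fin m) ℝ} (hQP : Q * P = 1) {c : ℝ} (hc : 0 < c)
    (hQ : ∀ i, euclNorm (Q i) ≤ c) : (√k * c)⁻¹ ≤ smallSV P := by
  have : Nonempty {x : Fin k → ℝ // euclNorm x = 1} :=
    ⟨⟨Pi.single ⟨0, hk⟩ 1, by simp [euclNorm, Pi.single_apply, ite_pow]⟩⟩
  refine le_ciInf fun ⟨x, hx⟩ => ?_
  set y := P *ᵥ x
  have hxy : Q *ᵥ y = x := by rw [mulVec_mulVec, hQP, one_mulVec]
  have hcoord : ∀ i, x i ^ 2 ≤ c ^ 2 * euclNorm y ^ 2 := fun i =>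
    calc x i ^ 2 = (∑ a, Q i a * y a) ^ 2 := by rw [← hxy]; rfl
      _ ≤ (∑ a, Q i a ^ 2) * ∑ a, y a ^ 2 := Finset.sum_mul_sq_le_sq_mul_sq _ _ _
      _ = euclNorm (Q i) ^ 2 * euclNorm y ^ 2 := by rw [euclNorm_sq, euclNorm_sq]
      _ ≤ c ^ 2 * euclNorm y ^ 2 := by gcongr; exacts [euclNorm_nonneg _, hQ i]
  have hsq : 1 ≤ (√k * c * euclNorm y) ^ 2 :=
    calc 1 = ∑ i, x i ^ 2 := by rw [← euclNorm_sq, hx, one_pow]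
      _ ≤ ∑ _i : Fin k, c ^ 2 * euclNorm y ^ 2 := Finset.sum_le_sum fun i _ => hcoord i
      _ = (√k * c * euclNorm y) ^ 2 := by
        rw [Finset.sum_const, Finset.card_univ, Fintype.card_fin, nsmul_eq_mul, mul_pow, mul_pow,
          Real.sq_sqrt k.cast_nonneg, mul_assoc]
  rw [inv_le_iff_one_le_mul₀' (by positivity)]
  exact (one_le_sq_iff₀ (by have := euclNorm_nonneg y; positivity)).1 hsq

end Matrix

section AffineSimplex

variable {𝕜 V P : Type*} [Field 𝕜] [AddCommGroup V] [Module 𝕜 V] [AddTorsor V P] {k : ℕ}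
  (p : Fin (k + 1) → P)

def edgeVec (j : Fin k) : V := p j.succ -ᵥ p 0

variable (𝕜) in
abbrev facet (i : Fin (k + 1)) : AffineSubspace 𝕜 P := affineSpan 𝕜 (p '' {j | j ≠ i})

theorem mem_facet {i j : Fin (k + 1)} (h : j ≠ i) : p j ∈ facet 𝕜 p i :=
  subset_affineSpan 𝕜 _ ⟨j, h, rfl⟩

theorem direction_facet_succ (i : Fin k) :
    (facet 𝕜 p i.succ).direction = Submodule.span 𝕜 (edgeVec p '' {j | j ≠ i}) := by
  apply le_antisymm
  · rw [direction_affineSpan, vectorSpan_eq_span_vsub_set_right 𝕜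
      (Set.mem_image_of_mem p (Fin.succ_ne_zero i).symm), Submodule.span_le]
    rintro _ ⟨_, ⟨j, hj, rfl⟩, rfl⟩
    cases j using Fin.cases with
    | zero => simp
    | succ j => exact Submodule.subset_span ⟨j, fun h => hj (congrArg Fin.succ h), rfl⟩
  · rw [Submodule.span_le]
    rintro _ ⟨j, hj, rfl⟩
    exact AffineSubspace.vsub_mem_direction (mem_facet p (by simpa using hj))
      (mem_facet p (Fin.succ_ne_zero i).symm)

theorem linearIndependent_edgeVec (h : ∀ i, p i ∉ facet 𝕜 p i) :
    LinearIndependent 𝕜 (edgeVec p) := by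
  rw [linearIndependent_iff_notMem_span]
  intro i hi
  have hdir : edgeVec p i ∈ (facet 𝕜 p i.succ).direction := by
    rwa [direction_facet_succ, show {j | j ≠ i} = Set.univ \ {i} by ext; simp]
  apply h i.succ
  simpa [edgeVec] using
    AffineSubspace.vadd_mem_of_mem_direction hdir (mem_facet p (Fin.succ_ne_zero i).symm)

end AffineSimplex

section Simplex

variable {m k : ℕ}

theorem vertMatrix_mulVec_injective {p : Fin (k + 1) → E m} (h : ∀ i, p i ∉ facet ℝ p i) :
    Function.Injective (vertMatrix p).mulVec := by
  rw [mulVec_injective_iff]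
  exact (linearIndependent_edgeVec p h).map' (WithLp.linearEquiv 2 ℝ (Fin m → ℝ)).toLinearMap
    (WithLp.linearEquiv 2 ℝ (Fin m → ℝ)).ker

variable (p : Fin (k + 1) → E m)

def dualVec (i : Fin k) : E m := WithLp.toLp 2 (pseudoInv (vertMatrix p) i)

theorem inner_dualVec (i : Fin k) (x : E m) :
    ⟪dualVec p i, x⟫ = ∑ a, pseudoInv (vertMatrix p) i a * x a := by
  simp [dualVec, PiLp.inner_apply, mul_comm]

theorem dualVec_eq_sum (i : Fin k) :
    dualVec p i = ∑ j, ((vertMatrix p)ᵀ * vertMatrix p)⁻¹ i j • edgeVec p j := by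
  ext a
  simp [dualVec, pseudoInv, mul_apply, edgeVec, vertMatrix]

theorem dualVec_mem_direction_sup (i : Fin k) :
    dualVec p i ∈ (facet ℝ p i.succ).direction ⊔ ℝ ∙ edgeVec p i := by
  rw [dualVec_eq_sum]
  refine Submodule.sum_mem _ fun j _ => Submodule.smul_mem _ _ ?_
  rcases eq_or_ne j i with rfl | hj
  · exact Submodule.mem_sup_right (Submodule.mem_span_singleton_self _)
  · refine Submodule.mem_sup_left ?_
    rw [direction_facet_succ]
    exact Submodule.subset_span ⟨j, hj, rfl⟩

variable {p} (hP : IsUnit ((vertMatrix p)ᵀ * vertMatrix p).det)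
include hP

theorem inner_dualVec_edgeVec (i j : Fin k) :
    ⟪dualVec p i, edgeVec p j⟫ = if i = j then 1 else 0 := by
  rw [inner_dualVec, ← one_apply, ← pseudoInv_mul_self hP, mul_apply]
  rfl

theorem dualVec_mem_orthogonal (i : Fin k) : dualVec p i ∈ (facet ℝ p i.succ).directionᗮ := by
  have : (facet ℝ p i.succ).direction ≤ LinearMap.ker (innerₛₗ ℝ (dualVec p i)) := by
    rw [direction_facet_succ, Submodule.span_le]
    rintro _ ⟨j, hj, rfl⟩
    simp [inner_dualVec_edgeVec hP, Ne.symm hj]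
  exact (Submodule.mem_orthogonal' _ _).2 fun u hu => this hu

theorem altitude_succ_eq_inv_norm_dualVec (i : Fin k) : altitude p i.succ = ‖dualVec p i‖⁻¹ :=
  infDist_eq_inv_norm_of_mem_orthogonal (mem_facet p (Fin.succ_ne_zero i).symm)
    (dualVec_mem_orthogonal hP i) ((inner_dualVec_edgeVec hP i i).trans (if_pos rfl))
    (dualVec_mem_direction_sup p i)

end Simplex

section Thickness

variable {m k : ℕ} (p : Fin (k + 1) → E m)

theorem iInf_altitude_le (j : Fin (k + 1)) : ⨅ i, altitude p i ≤ altitude p j :=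
  ciInf_le (Set.finite_range _).bddBelow j

theorem iInf_altitude_pos_and_longEdge_pos (hk : 0 < k) (h : 0 < thickness p) :
    0 < ⨅ i, altitude p i ∧ 0 < longEdge p := by
  rw [thickness, if_neg hk.ne'] at h
  have hA : 0 ≤ ⨅ i, altitude p i := le_ciInf fun i => Metric.infDist_nonneg
  rcases div_pos_iff.1 h with ⟨hApos, hkL⟩ | ⟨hAneg, _⟩
  · exact ⟨hApos, pos_of_mul_pos_right hkL k.cast_nonneg⟩
  · exact absurd hAneg hA.not_gt

theorem sqrt_mul_thickness_mul_longEdge (hk : 0 < k) (hL : longEdge p ≠ 0) :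
    √k * thickness p * longEdge p = (√k * (⨅ i, altitude p i)⁻¹)⁻¹ := by
  rw [thickness, if_neg hk.ne']
  field_simp
  rw [Real.sq_sqrt k.cast_nonneg, mul_comm]

end Thickness

/-- Thickness and singular value (Lemma: rows of the pseudo-inverse are dual vectors,
orthogonal to the opposite facet, with norm the inverse altitude; hence
s_k(P) ≥ √k · t(σ) · L(σ)). -/
theorem stmt0 {m k : ℕ} (hk : 0 < k) (p : Fin (k+1) → E m)
    (hnd : 0 < thickness p) :
    (∀ i : Fin k,
      (∀ x y : E m,
        x ∈ (↑(affineSpan ℝ (p '' {j | j ≠ i.succ})) : Set (E m)) →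
        y ∈ (↑(affineSpan ℝ (p '' {j | j ≠ i.succ})) : Set (E m)) →
          ∑ a, pseudoInv (vertMatrix p) i a * (x a - y a) = 0) ∧
      euclNorm (fun a => pseudoInv (vertMatrix p) i a) = (altitude p i.succ)⁻¹) ∧
    smallSV (vertMatrix p) ≥ Real.sqrt k * thickness p * longEdge p := by
  obtain ⟨hA, hL⟩ := iInf_altitude_pos_and_longEdge_pos p hk hnd
  have hP : IsUnit ((vertMatrix p)ᵀ * vertMatrix p).det :=
    isUnit_det_transpose_mul_self <| vertMatrix_mulVec_injective fun i hi =>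
      (lt_of_lt_of_le hA (iInf_altitude_le p i)).ne' (Metric.infDist_zero_of_mem hi)
  have hnorm (i : Fin k) : euclNorm (pseudoInv (vertMatrix p) i) = (altitude p i.succ)⁻¹ := by
    rw [altitude_succ_eq_inv_norm_dualVec hP, inv_inv, euclNorm_eq_norm, dualVec]
  refine ⟨fun i => ⟨fun x y hx hy => ?_, hnorm i⟩, ?_⟩
  · exact (inner_dualVec p i (x - y)).symm.trans <| Submodule.inner_left_of_mem_orthogonal
      (AffineSubspace.vsub_mem_direction hx hy) (dualVec_mem_orthogonal hP i)
  · rw [ge_iff_le, sqrt_mul_thickness_mul_longEdge p hk hL.ne']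
    refine inv_le_smallSV_of_mul_eq_one hk (pseudoInv_mul_self hP) (inv_pos.2 hA) fun i => ?_
    rw [hnorm]
    exact inv_anti₀ hA (iInf_altitude_le p i.succ)
end
end

section
/- Suppose σ = [p₀,…,p_k] and σ̃ = [p̃₀,…,p̃_k] are two k-simplices in ℝ^m such that |‖pᵢ − pⱼ‖ − ‖p̃ᵢ − p̃ⱼ‖| ≤ ξ₀·L(σ) for all 0 ≤ i < j ≤ k, where ξ₀ ≤ 2/3. Let P and P̃ be the m × k matrices with columns pᵢ − p₀ and p̃ᵢ − p̃₀ respectively, and write P̃ᵀP̃ = PᵀP + E. Then every entry of E satisfies |E_{ij}| ≤ 4ξ₀·L(σ)², and the operator norm satisfies ‖E‖ ≤ 4k·ξ₀·L(σ)². -/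
open Matrix Metric
open scoped Classical BigOperators

noncomputable section

lemma gram_entry {m k : ℕ} (p : Fin (k+1) → E m) (i j : Fin k) :
    ((vertMatrix p)ᵀ * vertMatrix p) i j =
      (dist (p 0) (p i.succ) ^ 2 + dist (p 0) (p j.succ) ^ 2
        - dist (p i.succ) (p j.succ) ^ 2) / 2 := by
  have hd : ∀ x y : Fin (k+1), dist (p x) (p y) ^ 2 = ∑ a, (p x a - p y a) ^ 2 := by
    intro x y
    rw [EuclideanSpace.dist_eq, Real.sq_sqrt (Finset.sum_nonneg fun a _ => sq_nonneg _)]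
    exact Finset.sum_congr rfl fun a _ => by rw [Real.dist_eq, sq_abs]
  simp only [Matrix.mul_apply, Matrix.transpose_apply, vertMatrix, hd]
  rw [← Finset.sum_add_distrib, ← Finset.sum_sub_distrib,
    eq_div_iff (by norm_num : (2:ℝ) ≠ 0), Finset.sum_mul]
  exact Finset.sum_congr rfl fun a _ => by ring

lemma sqdiff {a b ξ L : ℝ} (ha0 : 0 ≤ a) (hb0 : 0 ≤ b) (haL : a ≤ L)
    (hab : |a - b| ≤ ξ * L) (hξ0 : 0 ≤ ξ) (hξ : ξ ≤ 2/3) (hL : 0 ≤ L) :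
    |b ^ 2 - a ^ 2| ≤ 8/3 * ξ * L ^ 2 := by
  rw [abs_le] at hab ⊢
  constructor <;> nlinarith [mul_nonneg hξ0 hL, sq_nonneg L, mul_nonneg (mul_nonneg hξ0 hL) hL]

/-- Gram matrix perturbation bound under edge-length distortion. -/
theorem stmt2 {m k : ℕ} (p q : Fin (k+1) → E m) (ξ₀ : ℝ)
    (hξ0 : 0 ≤ ξ₀) (hξ : ξ₀ ≤ 2/3)
    (h : ∀ i j : Fin (k+1), i < j →
      |dist (p i) (p j) - dist (q i) (q j)| ≤ ξ₀ * longEdge p) :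
    (∀ i j : Fin k,
      |((vertMatrix q)ᵀ * vertMatrix q - (vertMatrix p)ᵀ * vertMatrix p) i j|
        ≤ 4 * ξ₀ * longEdge p ^ 2) ∧
    largeSV ((vertMatrix q)ᵀ * vertMatrix q - (vertMatrix p)ᵀ * vertMatrix p)
      ≤ 4 * k * ξ₀ * longEdge p ^ 2 := by
  set L := longEdge p with hLdef
  have hedge : ∀ a b : Fin (k+1), dist (p a) (p b) ≤ L := by
    intro a b
    have h1 : dist (p a) (p b) ≤ ⨆ j, dist (p a) (p j) :=
      le_ciSup (f := fun j => dist (p a) (p j))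
        (Set.Finite.bddAbove (Set.finite_range _)) b
    exact h1.trans (le_ciSup (f := fun i => ⨆ j, dist (p i) (p j))
        (Set.Finite.bddAbove (Set.finite_range _)) a)
  have hL0 : 0 ≤ L := by
    have := hedge 0 0; rwa [dist_self] at this
  have hdd : ∀ a b : Fin (k+1), |dist (p a) (p b) - dist (q a) (q b)| ≤ ξ₀ * L := by
    intro a b
    rcases lt_trichotomy a b with h' | h' | h'
    · exact h a b h'
    · subst h'; simpa using mul_nonneg hξ0 hL0
    · rw [dist_comm (p a), dist_comm (q a)]; exact h b a h'
  have hmain : ∀ i j : Fin k,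
      |((vertMatrix q)ᵀ * vertMatrix q - (vertMatrix p)ᵀ * vertMatrix p) i j|
        ≤ 4 * ξ₀ * L ^ 2 := by
    intro i j
    rw [Matrix.sub_apply, gram_entry, gram_entry]
    have h1 := sqdiff dist_nonneg dist_nonneg (hedge 0 i.succ) (hdd 0 i.succ) hξ0 hξ hL0
    have h2 := sqdiff dist_nonneg dist_nonneg (hedge 0 j.succ) (hdd 0 j.succ) hξ0 hξ hL0
    have h3 := sqdiff dist_nonneg dist_nonneg (hedge i.succ j.succ) (hdd i.succ j.succ) hξ0 hξ hL0
    rw [abs_le] at h1 h2 h3 ⊢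
    constructor <;> [linarith [h1.1, h2.1, h3.2]; linarith [h1.2, h2.2, h3.1]]
  refine ⟨hmain, ?_⟩
  set EE := (vertMatrix q)ᵀ * vertMatrix q - (vertMatrix p)ᵀ * vertMatrix p with hEE
  set M := 4 * ξ₀ * L ^ 2 with hM
  have hM0 : 0 ≤ M := by positivity
  unfold largeSV
  apply Real.iSup_le _ (by positivity)
  rintro ⟨x, hx⟩
  unfold euclNorm at hx ⊢
  have hx2 : ∑ j, x j ^ 2 = 1 := by
    have h0 : 0 ≤ ∑ j, x j ^ 2 := Finset.sum_nonneg fun _ _ => sq_nonneg _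
    have := Real.sq_sqrt h0
    rw [hx, one_pow] at this
    linarith
  have habs : ∀ i, |∑ j, EE i j * x j| ≤ M * ∑ j, |x j| := by
    intro i
    calc |∑ j, EE i j * x j| ≤ ∑ j, |EE i j * x j| := Finset.abs_sum_le_sum_abs _ _
      _ ≤ ∑ j, M * |x j| := Finset.sum_le_sum fun j _ => by
            rw [abs_mul]; exact mul_le_mul_of_nonneg_right (hmain i j) (abs_nonneg _)
      _ = M * ∑ j, |x j| := by rw [Finset.mul_sum]
  have hsum1 : (∑ j, |x j|) ^ 2 ≤ (k : ℝ) := by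
    have hcs := sq_sum_le_card_mul_sum_sq (s := (Finset.univ : Finset (Fin k)))
      (f := fun j => |x j|)
    simpa [sq_abs, hx2] using hcs
  have key : ∑ i, (Matrix.mulVec EE x i) ^ 2 ≤ ((k : ℝ) * M) ^ 2 := by
    have step : ∀ i : Fin k, (Matrix.mulVec EE x i) ^ 2 ≤ (M * ∑ j, |x j|) ^ 2 := by
      intro i
      rw [← sq_abs]
      apply pow_le_pow_left₀ (abs_nonneg _)
      simpa [Matrix.mulVec, dotProduct] using habs i
    calc ∑ i, (Matrix.mulVec EE x i) ^ 2 ≤ ∑ _i : Fin k, (M * ∑ j, |x j|) ^ 2 :=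
          Finset.sum_le_sum fun i _ => step i
      _ = (k : ℝ) * (M * ∑ j, |x j|) ^ 2 := by
          rw [Finset.sum_const, Finset.card_univ, Fintype.card_fin, nsmul_eq_mul]
      _ ≤ ((k : ℝ) * M) ^ 2 := by
          nlinarith [mul_le_mul_of_nonneg_left hsum1
            (show (0:ℝ) ≤ (k : ℝ) * M ^ 2 by positivity)]
  calc Real.sqrt (∑ i, Matrix.mulVec EE x i ^ 2) ≤ Real.sqrt (((k : ℝ) * M) ^ 2) :=
        Real.sqrt_le_sqrt key
    _ = (k : ℝ) * M := Real.sqrt_sq (by positivity)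
    _ = 4 * k * ξ₀ * L ^ 2 := by rw [hM]; ring
end
end

section
/- Let σ^m be an m-simplex in a finite set P ⊂ ℝ^m that is a Delaunay simplex but is not δ-protected for some δ ≥ 0, and suppose the Delaunay complex of P contains σ^m. Then there exists a point q ∈ P \ σ^m with |d(q, C(σ^m)) − R(σ^m)| ≤ δ, and for any Γ₀ ∈ (0,1], the (m+1)-simplex q * σ^m (being an (m+1)-simplex in ℝ^m, hence degenerate) contains a face τ that is a Γ₀-flake. -/
open Matrix Metric
open scoped Classical BigOperators

noncomputable section

/-- From a nontrivial affine relation, some point lies in the affine span of the others. -/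
lemma exists_mem_affineSpan_erase {m : ℕ} (t : Finset (E m))
    (h : ¬ AffineIndependent ℝ ((↑) : t → E m)) :
    ∃ x ∈ t, x ∈ affineSpan ℝ ((t.erase x : Finset (E m)) : Set (E m)) := by
  obtain ⟨f, hsum, hzero, x, hx, hfx⟩ :=
    exists_nontrivial_relation_sum_zero_of_not_affine_ind h
  refine ⟨x, hx, ?_⟩
  have herase : ∑ e ∈ t.erase x, f e = -f x := by
    have h1 := Finset.add_sum_erase t f hx
    linarith
  have herase2 : ∑ e ∈ t.erase x, f e • e = -(f x • x) := by
    have h1 := Finset.add_sum_erase t (fun e => f e • e) hx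
    simp only [hsum] at h1
    rw [add_comm] at h1
    exact eq_neg_of_add_eq_zero_left h1
  have hw1 : ∑ e : {y // y ∈ t.erase x}, (-f (e : E m) / f x) = 1 := by
    rw [Finset.sum_coe_sort (t.erase x) (fun e => -f e / f x), ← Finset.sum_div]
    rw [Finset.sum_neg_distrib, herase, neg_neg, div_self hfx]
  have hmem := affineCombination_mem_affineSpan (k := ℝ) hw1
    (fun e : {y // y ∈ t.erase x} => (e : E m))
  rw [show Set.range (fun e : {y // y ∈ t.erase x} => (e : E m)) =
      ((t.erase x : Finset (E m)) : Set (E m)) from Subtype.range_coe] at hmem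
  have hval : (Finset.univ.affineCombination ℝ (fun e : {y // y ∈ t.erase x} => (e : E m))
      (fun e => -f (e : E m) / f x)) = x := by
    rw [Finset.affineCombination_eq_linear_combination _ _ _ hw1]
    rw [Finset.sum_coe_sort (t.erase x) (fun e => (-f e / f x) • e)]
    have : ∀ e ∈ t.erase x, (-f e / f x) • e = (-(f x)⁻¹) • (f e • e) := by
      intro e _
      rw [smul_smul]
      ring_nf
    rw [Finset.sum_congr rfl this, ← Finset.smul_sum, herase2, smul_neg, neg_smul, neg_neg,
      smul_smul, inv_mul_cancel₀ hfx, one_smul]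
  rwa [hval] at hmem

/-- A finset of cardinality m+2 in ℝ^m has zero minimal altitude. -/
lemma fMinAlt_eq_zero {m : ℕ} (s : Finset (E m)) (hc : s.card = m + 2) :
    fMinAlt s = 0 := by
  have hni : ¬ AffineIndependent ℝ ((↑) : s → E m) := by
    intro hai
    have h1 := hai.card_le_finrank_succ
    have h2 : Module.finrank ℝ (vectorSpan ℝ (Set.range ((↑) : s → E m))) ≤ m := by
      have := Submodule.finrank_le (vectorSpan ℝ (Set.range ((↑) : s → E m)))
      simpa [finrank_euclideanSpace_fin] using this
    rw [Fintype.card_coe, hc] at h1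
    omega
  obtain ⟨x, hxs, hxspan⟩ := exists_mem_affineSpan_erase s hni
  have hbdd : BddBelow (Set.range fun p : {p // p ∈ s} =>
      Metric.infDist (p : E m) (↑(affineSpan ℝ ((s.erase (p : E m)) : Set (E m))) : Set (E m))) :=
    ⟨0, by rintro y ⟨p, rfl⟩; exact Metric.infDist_nonneg⟩
  have hle : fMinAlt s ≤ 0 := by
    have := ciInf_le hbdd (⟨x, hxs⟩ : {p // p ∈ s})
    rwa [Metric.infDist_zero_of_mem hxspan] at this
  have hge : 0 ≤ fMinAlt s := by
    have : Nonempty {p // p ∈ s} := ⟨⟨x, hxs⟩⟩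
    exact le_ciInf fun p => Metric.infDist_nonneg
  linarith

/-- A finset of cardinality m+2 in ℝ^m is not Γ₀-good. -/
lemma not_isGood_of_card {m : ℕ} (Γ₀ : ℝ) (hΓ : 0 < Γ₀) (s : Finset (E m))
    (hc : s.card = m + 2) : ¬ isGood Γ₀ s := by
  intro hg
  have hne : s.Nonempty := Finset.card_pos.1 (by omega)
  have := hg s subset_rfl hne
  rw [fThickness, if_neg (by omega), fMinAlt_eq_zero s hc, zero_div] at this
  have : (0 : ℝ) < Γ₀ ^ (s.card - 1) := pow_pos hΓ _
  linarith [hg s subset_rfl hne,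
    (by rw [fThickness, if_neg (show ¬ s.card ≤ 1 by omega), fMinAlt_eq_zero s hc, zero_div] :
      fThickness s = 0)]

/-- Any non-good set contains a flake. -/
lemma exists_flake {m : ℕ} (Γ₀ : ℝ) (s : Finset (E m)) (h : ¬ isGood Γ₀ s) :
    ∃ τ ⊆ s, isFlake Γ₀ τ := by
  induction s using Finset.strongInduction with
  | _ s ih =>
    by_cases hall : ∀ p ∈ s, isGood Γ₀ (s.erase p)
    · exact ⟨s, subset_rfl, h, hall⟩
    · push_neg at hall
      obtain ⟨p, hp, hbad⟩ := hall
      obtain ⟨τ, hτ, hfl⟩ := ih (s.erase p) (Finset.erase_ssubset hp) hbad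
      exact ⟨τ, hτ.trans (Finset.erase_subset _ _), hfl⟩

/-- An unprotected Delaunay m-simplex gives rise to a flake. -/
theorem stmt12 {m : ℕ} (P σ : Finset (E m)) (hσP : σ ⊆ P) (hcard : σ.card = m + 1)
    (C : E m) (R δ : ℝ) (hδ : 0 ≤ δ)
    (hcirc : ∀ p ∈ σ, dist C p = R)
    (hdel : ∀ q ∈ P, R ≤ dist C q)
    (hnotprot : ∃ q ∈ P, q ∉ σ ∧ dist C q ≤ R + δ) :
    ∃ q ∈ P, q ∉ σ ∧ |dist q C - R| ≤ δ ∧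
      ∀ Γ₀ : ℝ, 0 < Γ₀ → Γ₀ ≤ 1 →
        ∃ τ ⊆ insert q σ, isFlake Γ₀ τ := by
  obtain ⟨q, hqP, hqσ, hqd⟩ := hnotprot
  refine ⟨q, hqP, hqσ, ?_, ?_⟩
  · have h1 := hdel q hqP
    rw [dist_comm, abs_le]
    constructor <;> linarith
  · intro Γ₀ hΓ₀ _
    have hc : (insert q σ).card = m + 2 := by
      rw [Finset.card_insert_of_notMem hqσ, hcard]
    exact exists_flake Γ₀ _ (not_isGood_of_card Γ₀ hΓ₀ _ hc)
end
end
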